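/- Let I ⊆ ℝ₊ be a nonempty interval with inf(I·I^{-1}) = 0 (i.e., inf I = 0 or sup I = ∞) and n ≥ 2. Then Γ_n(I) is a cone: for all t > 0 and all ((r,s),(p,q)) ∈ Γ_n(I), also ((tr,ts),(tp,tq)) ∈ Γ_n(I). -/

import Mathlib

/-!
Gini means are positively homogeneous, and `G_{tp,tq}(x) = G_{p,q}(x^t)^{1/t}`. So to compare
`G_{tr,ts}` with `G_{tp,tq}` at `x ∈ Iⁿ` it suffices to compare `G_{r,s}` with `G_{p,q}` at some
positive multiple of `x^t`. Such a multiple lies in `Iⁿ` because `inf (I·I⁻¹) = 0` means that `I`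
contains intervals `[u, v]` with arbitrarily large ratio `v / u`, which can accommodate the ratio
`max x^t / min x^t`.
-/

open Real Finset Pointwise

noncomputable def gini (p q : ℝ) {n : ℕ} (x : Fin n → ℝ) : ℝ :=
  if p = q then Real.exp ((∑ i, x i ^ p * Real.log (x i)) / ∑ i, x i ^ p)
  else ((∑ i, x i ^ p) / ∑ i, x i ^ q) ^ (1 / (p - q))
def Gamma (n : ℕ) (I : Set ℝ) : Set ((ℝ × ℝ) × (ℝ × ℝ)) :=
  {w | ∀ x : Fin n → ℝ, (∀ i, x i ∈ I) → gini w.1.1 w.1.2 x ≤ gini w.2.1 w.2.2 x}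

section Interval

variable {I : Set ℝ}

lemma exists_div_lt_of_sInf_mul_inv_eq_zero (hI : I.Nonempty) (h0 : sInf (I * I⁻¹) = 0)
    {ε : ℝ} (hε : 0 < ε) : ∃ u ∈ I, ∃ v ∈ I, u / v < ε := by
  obtain ⟨z, ⟨u, hu, w, hw, rfl⟩, hz⟩ :=
    exists_lt_of_csInf_lt (hI.mul hI.inv) (h0.symm ▸ hε : sInf (I * I⁻¹) < ε)
  exact ⟨u, hu, w⁻¹, Set.mem_inv.mp hw, by rwa [div_inv_eq_mul]⟩

lemma Set.OrdConnected.div_mul_mem {u v m M y : ℝ} (hIint : I.OrdConnected) (hu : u ∈ I)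
    (hv : v ∈ I) (hu0 : 0 ≤ u) (hm : 0 < m) (huv : u * M ≤ m * v) (hmy : m ≤ y) (hyM : y ≤ M) :
    u / m * y ∈ I := by
  refine hIint.out hu hv ⟨?_, ?_⟩
  · calc u = u / m * m := (div_mul_cancel₀ u hm.ne').symm
      _ ≤ u / m * y := by gcongr
  · calc u / m * y ≤ u / m * M := by gcongr
      _ = u * M / m := div_mul_eq_mul_div u m M
      _ ≤ v := (div_le_iff₀' hm).mpr huv

lemma exists_pos_mul_mem_of_sInf_mul_inv_eq_zero {ι : Type*} [Fintype ι] [Nonempty ι]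
    (hI : I.Nonempty) (hIpos : I ⊆ Set.Ioi 0) (hIint : I.OrdConnected)
    (h0 : sInf (I * I⁻¹) = 0) {y : ι → ℝ} (hy : ∀ i, 0 < y i) :
    ∃ c > 0, ∀ i, c * y i ∈ I := by
  obtain ⟨imin, -, hmin⟩ := exists_min_image univ y univ_nonempty
  obtain ⟨imax, -, hmax⟩ := exists_max_image univ y univ_nonempty
  obtain ⟨u, hu, v, hv, huv⟩ :=
    exists_div_lt_of_sInf_mul_inv_eq_zero hI h0 (div_pos (hy imin) (hy imax))
  have hu0 : 0 < u := hIpos hu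
  have hv0 : 0 < v := hIpos hv
  rw [div_lt_div_iff₀ hv0 (hy imax)] at huv
  exact ⟨u / y imin, div_pos hu0 (hy imin), fun i =>
    hIint.div_mul_mem hu hv hu0.le (hy imin) huv.le
      (hmin i (mem_univ i)) (hmax i (mem_univ i))⟩

end Interval

section Gini

variable {n : ℕ}

lemma sum_rpow_pos [NeZero n] {x : Fin n → ℝ} (hx : ∀ i, 0 < x i) (p : ℝ) :
    0 < ∑ i, x i ^ p :=
  sum_pos (fun i _ => rpow_pos_of_pos (hx i) p) univ_nonempty

lemma gini_pos [NeZero n] (p q : ℝ) {x : Fin n → ℝ} (hx : ∀ i, 0 < x i) :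
    0 < gini p q x := by
  unfold gini
  split
  · exact exp_pos _
  · exact rpow_pos_of_pos (div_pos (sum_rpow_pos hx p) (sum_rpow_pos hx q)) _

lemma gini_smul [NeZero n] (p q : ℝ) {c : ℝ} (hc : 0 < c) {x : Fin n → ℝ}
    (hx : ∀ i, 0 < x i) : gini p q (c • x) = c * gini p q x := by
  have hsum : ∀ r : ℝ, ∑ i, (c • x) i ^ r = c ^ r * ∑ i, x i ^ r := fun r => by
    rw [mul_sum]
    exact sum_congr rfl fun i _ => mul_rpow hc.le (hx i).le
  unfold gini
  split_ifs with hpq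
  · subst hpq
    have hlog : ∀ i, (c • x) i ^ p * log ((c • x) i)
        = c ^ p * (x i ^ p * log c + x i ^ p * log (x i)) := fun i => by
      rw [Pi.smul_apply, smul_eq_mul, mul_rpow hc.le (hx i).le, log_mul hc.ne' (hx i).ne']
      ring
    have hS := sum_rpow_pos hx p
    rw [hsum, sum_congr rfl fun i _ => hlog i, ← mul_sum, sum_add_distrib, ← sum_mul]
    conv_rhs => rw [← exp_log hc, ← exp_add]
    congr 1
    field_simp
  · rw [hsum, hsum, mul_div_mul_comm, mul_rpow (by positivity)
      (div_pos (sum_rpow_pos hx p) (sum_rpow_pos hx q)).le, ← rpow_sub hc, ← rpow_mul hc.le,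
      mul_one_div, div_self (sub_ne_zero.mpr hpq), rpow_one]

lemma gini_mul_mul (p q : ℝ) {t : ℝ} (ht : t ≠ 0) {x : Fin n → ℝ} (hx : ∀ i, 0 < x i) :
    gini (t * p) (t * q) x = gini p q (fun i => x i ^ t) ^ (1 / t) := by
  have hpow : ∀ r : ℝ, ∀ i, (x i ^ t) ^ r = x i ^ (t * r) := fun r i =>
    (rpow_mul (hx i).le t r).symm
  unfold gini
  by_cases hpq : p = q
  · subst hpq
    have hlog : ∀ i, (x i ^ t) ^ p * log (x i ^ t) = t * (x i ^ (t * p) * log (x i)) :=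
      fun i => by rw [hpow, log_rpow (hx i)]; ring
    rw [if_pos rfl, if_pos rfl, rpow_def_of_pos (exp_pos _), log_exp,
      sum_congr rfl fun i _ => hlog i, ← mul_sum]
    simp only [hpow]
    congr 1
    field_simp
  · have htpq : t * p ≠ t * q := fun h => hpq (mul_left_cancel₀ ht h)
    have hS : ∀ r : ℝ, 0 ≤ ∑ i, x i ^ r := fun r =>
      sum_nonneg fun i _ => rpow_nonneg (hx i).le r
    rw [if_neg htpq, if_neg hpq]
    simp only [hpow]
    rw [← rpow_mul (div_nonneg (hS _) (hS _))]
    congr 1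
    field_simp

end Gini

theorem Gamma_cone_general (I : Set ℝ) (hIpos : I ⊆ Set.Ioi 0)
    (hIint : I.OrdConnected) (h0 : sInf (I * I⁻¹) = 0) (n : ℕ) (hn : 2 ≤ n)
    (t : ℝ) (ht : 0 < t) (w : (ℝ × ℝ) × (ℝ × ℝ)) (hw : w ∈ Gamma n I) :
    t • w ∈ Gamma n I := by
  intro x hx
  have : NeZero n := ⟨by omega⟩
  have hx0 : ∀ i, 0 < x i := fun i => hIpos (hx i)
  have hxt0 : ∀ i, 0 < x i ^ t := fun i => rpow_pos_of_pos (hx0 i) t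
  obtain ⟨c, hc, hcI⟩ :=
    exists_pos_mul_mem_of_sInf_mul_inv_eq_zero ⟨x 0, hx 0⟩ hIpos hIint h0 hxt0
  have hxt : gini w.1.1 w.1.2 (fun i => x i ^ t) ≤ gini w.2.1 w.2.2 (fun i => x i ^ t) := by
    have := hw (c • fun i => x i ^ t) hcI
    rwa [gini_smul _ _ hc hxt0, gini_smul _ _ hc hxt0, mul_le_mul_iff_right₀ hc] at this
  change gini (t * w.1.1) (t * w.1.2) x ≤ gini (t * w.2.1) (t * w.2.2) x
  rw [gini_mul_mul _ _ ht.ne' hx0, gini_mul_mul _ _ ht.ne' hx0]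
  exact rpow_le_rpow (gini_pos _ _ hxt0).le hxt (by positivity)

theorem Gamma_cone (I : Set ℝ) (hI : I.Nonempty) (hIpos : I ⊆ Set.Ioi 0)
    (hIint : I.OrdConnected) (h0 : sInf (I * I⁻¹) = 0) (n : ℕ) (hn : 2 ≤ n)
    (t : ℝ) (ht : 0 < t) (w : (ℝ × ℝ) × (ℝ × ℝ)) (hw : w ∈ Gamma n I) :
    t • w ∈ Gamma n I :=
  Gamma_cone_general I hIpos hIint h0 n hn t ht w hw
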